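/- For any multicast discrete memoryless channel with possibly different energy functions b_ℓ and unequal energy constraints, any positive integer n, and any energy constraint vector B⃗ in the feasible domain 𝓑, the n-th multicast capacity-energy function single-letterizes: C_n(B⃗) = n·C_1(B⃗). -/

import Mathlib

open scoped BigOperators

noncomputable section

/-- A probability vector on a finite alphabet. -/
def IsProbVec {α : Type} [Fintype α] (p : α → ℝ) : Prop :=
  (∀ a, 0 ≤ p a) ∧ (∑ a, p a) = 1

/-- A (row-stochastic) discrete channel. -/
def IsChannel {α β : Type} [Fintype β] (W : α → β → ℝ) : Prop :=
  ∀ x, (∀ y, 0 ≤ W x y) ∧ (∑ y, W x y) = 1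

/-- The memoryless `n`-letter extension of a channel. -/
def nCh {α β : Type} (W : α → β → ℝ) (n : ℕ) (x : Fin n → α) (y : Fin n → β) : ℝ :=
  ∏ i, W (x i) (y i)

/-- Output distribution induced by input distribution `p` through channel `W`. -/
def outDist {α β : Type} [Fintype α] (p : α → ℝ) (W : α → β → ℝ) (y : β) : ℝ :=
  ∑ x, p x * W x y

/-- Expected value `E[b(Y)]` of an energy function `b` at the channel output. -/
def outEnergy {α β : Type} [Fintype α] [Fintype β] (p : α → ℝ) (W : α → β → ℝ)
    (b : β → ℝ) : ℝ :=
  ∑ y, outDist p W y * b y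

/-- Additive block extension of an energy function. -/
def blockE {β : Type} (b : β → ℝ) {n : ℕ} (y : Fin n → β) : ℝ := ∑ i, b (y i)

/-- Mutual information `I(X;Y)` between the input `X ~ p` and the output of channel `W`. -/
def mutInfo {α β : Type} [Fintype α] [Fintype β] (p : α → ℝ) (W : α → β → ℝ) : ℝ :=
  ∑ x, ∑ y, p x * W x y * Real.log (W x y / outDist p W y)

/-- The `n`-th multicast capacity-energy function with energy constraint vector `B`. -/
def CnVec {𝓧 : Type} [Fintype 𝓧] {L : ℕ} {𝓨 : Fin L → Type} [∀ ℓ, Fintype (𝓨 ℓ)]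
    (W : ∀ ℓ, 𝓧 → 𝓨 ℓ → ℝ) (b : ∀ ℓ, 𝓨 ℓ → ℝ) (B : Fin L → ℝ) (n : ℕ) : ℝ :=
  sSup { r | ∃ p : (Fin n → 𝓧) → ℝ, IsProbVec p ∧
      (∀ ℓ, (n : ℝ) * B ℓ ≤ outEnergy p (nCh (W ℓ) n) (blockE (b ℓ))) ∧
      r = ⨅ ℓ, mutInfo p (nCh (W ℓ) n) }

/-- The multicast capacity-energy function `C(B⃗) = sup_n C_n(B⃗)/n`. -/
def CcapVec {𝓧 : Type} [Fintype 𝓧] {L : ℕ} {𝓨 : Fin L → Type} [∀ ℓ, Fintype (𝓨 ℓ)]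
    (W : ∀ ℓ, 𝓧 → 𝓨 ℓ → ℝ) (b : ∀ ℓ, 𝓨 ℓ → ℝ) (B : Fin L → ℝ) : ℝ :=
  ⨆ n : ℕ+, CnVec W b B n / (n : ℝ)

/-- Input distribution on `𝓧ⁿ` induced by a uniformly distributed message through encoder `f`. -/
def inducedDist {𝓧 : Type} [Fintype 𝓧] [DecidableEq 𝓧] {n M : ℕ}
    (f : Fin M → (Fin n → 𝓧)) (x : Fin n → 𝓧) : ℝ :=
  ((Finset.univ.filter (fun w => f w = x)).card : ℝ) / M

/-- Average error probability of the code `(f, g)` over channel `W`. -/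
def errProb {𝓧 𝓨 : Type} [Fintype 𝓨] {n M : ℕ}
    (W : 𝓧 → 𝓨 → ℝ) (f : Fin M → (Fin n → 𝓧)) (g : (Fin n → 𝓨) → Fin M) : ℝ :=
  (M : ℝ)⁻¹ * ∑ w, ∑ y, if g y = w then 0 else nCh W n (f w) y


/-- The domain `𝓑` of feasible energy constraint vectors: all `B⃗ ∈ ℝ^L` of the form
`B_ℓ = q⃗ · [P(ℓ)] · b⃗_ℓ` for some probability vector `q⃗` on the input alphabet. -/
def FeasibleB {𝓧 : Type} [Fintype 𝓧] {L : ℕ} {𝓨 : Fin L → Type} [∀ ℓ, Fintype (𝓨 ℓ)]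
    (W : ∀ ℓ, 𝓧 → 𝓨 ℓ → ℝ) (b : ∀ ℓ, 𝓨 ℓ → ℝ) : Set (Fin L → ℝ) :=
  { B | ∃ q : 𝓧 → ℝ, IsProbVec q ∧ ∀ ℓ, B ℓ = outEnergy q (W ℓ) (b ℓ) }

/-!
An i.i.d. input `p^⊗n` meets the `n`-letter energy constraints with `n` times the energy of `p`
and gives every receiver `n` times the information of `p`, so `C_n ≥ n C_1`. Conversely, the
block energy of an `n`-letter input is the sum of the energies of its marginals, so the average
`p̄` of the marginals is single-letter admissible; for a memoryless channel
`I(Xⁿ; Yⁿ) ≤ ∑ᵢ I(Xᵢ; Yᵢ) ≤ n I(p̄)` by subadditivity and concavity of mutual information.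
Both bounds hold receiver by receiver, hence also for the minimum over receivers.
-/

open Finset

lemma IsChannel.nCh {α β : Type} [Fintype β] {W : α → β → ℝ} (hW : IsChannel W) (n : ℕ) :
    IsChannel (nCh W n) :=
  fun x => ⟨fun y => prod_nonneg fun i _ => (hW (x i)).1 (y i), by
    simp only [_root_.nCh, ← Fintype.prod_sum, (hW _).2, prod_const_one]⟩

lemma sub_le_mul_log_div {q r : ℝ} (hq : 0 ≤ q) (hr : 0 ≤ r) (hqr : 0 < q → 0 < r) :
    q - r ≤ q * Real.log (q / r) := by
  rcases hq.eq_or_lt with rfl | hq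
  · simpa using hr
  have key := mul_le_mul_of_nonneg_left
    (Real.one_sub_inv_le_log_of_pos (div_pos hq (hqr hq))) hq.le
  rwa [inv_div, mul_sub, mul_one, mul_div_cancel₀ _ hq.ne'] at key

lemma sum_mul_log_div_nonneg {γ : Type} [Fintype γ] {q r : γ → ℝ} (hq : ∀ y, 0 ≤ q y)
    (hr : ∀ y, 0 ≤ r y) (hqr : ∀ y, 0 < q y → 0 < r y) (hsum : ∑ y, r y ≤ ∑ y, q y) :
    0 ≤ ∑ y, q y * Real.log (q y / r y) :=
  calc (0 : ℝ) ≤ ∑ y, (q y - r y) := by rw [sum_sub_distrib]; linarith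
    _ ≤ _ := sum_le_sum fun y _ => sub_le_mul_log_div (hq y) (hr y) (hqr y)

section Channel
variable {α β : Type} [Fintype α] [Fintype β]

lemma outDist_nonneg {p : α → ℝ} (hp : ∀ a, 0 ≤ p a) {W : α → β → ℝ} (hW : IsChannel W)
    (y : β) : 0 ≤ outDist p W y :=
  sum_nonneg fun x _ => mul_nonneg (hp x) ((hW x).1 y)

lemma sum_outDist {p : α → ℝ} (hp : IsProbVec p) {W : α → β → ℝ} (hW : IsChannel W) :
    ∑ y, outDist p W y = 1 := by
  simp only [outDist]
  rw [sum_comm]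
  simp only [← mul_sum, (hW _).2, mul_one, hp.2]

lemma mul_le_outDist {p : α → ℝ} (hp : ∀ a, 0 ≤ p a) {W : α → β → ℝ} (hW : IsChannel W)
    (x : α) (y : β) : p x * W x y ≤ outDist p W y :=
  single_le_sum (f := fun a => p a * W a y) (fun a _ => mul_nonneg (hp a) ((hW a).1 y))
    (mem_univ x)

/-- The gap is the divergence of the output distribution from `R`. -/
lemma mutInfo_le_sum_mul_log_div {p : α → ℝ} (hp : IsProbVec p) {W : α → β → ℝ}
    (hW : IsChannel W) {R : β → ℝ} (hR : ∀ y, 0 ≤ R y) (hRsum : ∑ y, R y ≤ 1)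
    (hac : ∀ y, 0 < outDist p W y → 0 < R y) :
    mutInfo p W ≤ ∑ x, ∑ y, p x * W x y * Real.log (W x y / R y) := by
  set Q := outDist p W
  have hsplit : ∀ x y, p x * W x y * Real.log (W x y / R y)
      = p x * W x y * Real.log (W x y / Q y) + p x * W x y * Real.log (Q y / R y) := by
    intro x y
    rcases (mul_nonneg (hp.1 x) ((hW x).1 y)).eq_or_lt with h0 | h0
    · simp [← h0]
    have hW0 : 0 < W x y := pos_of_mul_pos_right h0 (hp.1 x)
    have hQ : 0 < Q y := h0.trans_le (mul_le_outDist hp.1 hW x y)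
    have hR0 : 0 < R y := hac y hQ
    rw [← mul_add, ← Real.log_mul (by positivity) (by positivity), div_mul_div_cancel₀ hQ.ne']
  have hdiv : ∑ x, ∑ y, p x * W x y * Real.log (Q y / R y) = ∑ y, Q y * Real.log (Q y / R y) := by
    rw [sum_comm]
    exact sum_congr rfl fun y _ => (sum_mul _ _ _).symm
  have hgibbs : 0 ≤ ∑ y, Q y * Real.log (Q y / R y) :=
    sum_mul_log_div_nonneg (outDist_nonneg hp.1 hW) hR hac (hRsum.trans (sum_outDist hp hW).ge)
  simp only [hsplit, sum_add_distrib, hdiv]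
  exact le_add_of_nonneg_right hgibbs

end Channel

lemma sum_prod_mul_apply {ι β : Type} [Fintype ι] [DecidableEq ι] [Fintype β]
    (g : ι → β → ℝ) (hg : ∀ j, ∑ c, g j c = 1) (i : ι) (f : β → ℝ) :
    ∑ y : ι → β, (∏ j, g j (y j)) * f (y i) = ∑ c, g i c * f c := by
  calc ∑ y : ι → β, (∏ j, g j (y j)) * f (y i)
      = ∑ y : ι → β, ∏ j, g j (y j) * (if j = i then f (y j) else 1) := by
        simp only [prod_mul_distrib, prod_ite_eq', mem_univ, if_true]
    _ = ∏ j, ∑ c, g j c * (if j = i then f c else 1) :=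
        (Fintype.prod_sum fun j c => g j c * (if j = i then f c else 1)).symm
    _ = ∑ c, g i c * f c := by
        rw [prod_eq_single i (fun j _ hj => by simp [hj, hg]) (by simp)]
        simp

def prodDist {ι α : Type} [Fintype ι] (p : α → ℝ) (x : ι → α) : ℝ := ∏ i, p (x i)

lemma IsProbVec.prodDist {ι α : Type} [Fintype ι] [DecidableEq ι] [Fintype α] {p : α → ℝ}
    (hp : IsProbVec p) : IsProbVec (prodDist p : (ι → α) → ℝ) :=
  ⟨fun x => prod_nonneg fun i _ => hp.1 (x i), by
    simp only [_root_.prodDist, ← Fintype.prod_sum, hp.2, prod_const_one]⟩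

lemma outDist_prodDist_nCh {α β : Type} [Fintype α] {n : ℕ} (p : α → ℝ) (W : α → β → ℝ)
    (y : Fin n → β) : outDist (prodDist p) (nCh W n) y = ∏ i, outDist p W (y i) := by
  simp only [outDist, prodDist, _root_.nCh, ← prod_mul_distrib]
  exact (Fintype.prod_sum fun i a => p a * W a (y i)).symm

section Marginal
variable {ι α : Type} [Fintype ι] [DecidableEq ι] [Fintype α] [DecidableEq α]

def marg (p : (ι → α) → ℝ) (i : ι) (a : α) : ℝ :=
  ∑ x, if x i = a then p x else 0

lemma sum_marg_mul (p : (ι → α) → ℝ) (i : ι) (f : α → ℝ) :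
    ∑ a, marg p i a * f a = ∑ x, p x * f (x i) := by
  simp only [marg, sum_mul, ite_mul, zero_mul]
  rw [sum_comm]
  simp

lemma marg_nonneg {p : (ι → α) → ℝ} (hp : ∀ x, 0 ≤ p x) (i : ι) (a : α) : 0 ≤ marg p i a :=
  sum_nonneg fun x _ => by split_ifs <;> simp [hp x]

lemma le_marg {p : (ι → α) → ℝ} (hp : ∀ x, 0 ≤ p x) (i : ι) (x : ι → α) :
    p x ≤ marg p i (x i) := by
  simpa [marg] using single_le_sum (f := fun z : ι → α => if z i = x i then p z else 0)
    (fun z _ => by split_ifs <;> simp [hp z]) (mem_univ x)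

lemma IsProbVec.marg {p : (ι → α) → ℝ} (hp : IsProbVec p) (i : ι) : IsProbVec (marg p i) :=
  ⟨marg_nonneg hp.1 i, by simpa [hp.2] using sum_marg_mul p i 1⟩

lemma marg_prodDist {p : α → ℝ} (hp : IsProbVec p) (i : ι) : marg (prodDist p) i = p := by
  funext a
  have := sum_prod_mul_apply (fun _ => p) (fun _ => hp.2) i (fun c => if c = a then 1 else 0)
  simpa [marg, prodDist, mul_ite] using this

end Marginal

section Memoryless
variable {α β : Type} [Fintype α] [DecidableEq α] [Fintype β] {n : ℕ}

lemma sum_sum_mul_nCh_apply (p : (Fin n → α) → ℝ) {W : α → β → ℝ} (hW : IsChannel W)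
    (i : Fin n) (f : α → β → ℝ) :
    ∑ x, ∑ y, p x * nCh W n x y * f (x i) (y i) = ∑ a, ∑ c, marg p i a * W a c * f a c := by
  have hcollapse : ∀ x : Fin n → α,
      ∑ y, nCh W n x y * f (x i) (y i) = ∑ c, W (x i) c * f (x i) c := fun x =>
    sum_prod_mul_apply (fun j c => W (x j) c) (fun j => (hW (x j)).2) i (f (x i))
  calc ∑ x, ∑ y, p x * nCh W n x y * f (x i) (y i)
      = ∑ x, p x * ∑ c, W (x i) c * f (x i) c := by
        simp_rw [mul_assoc, ← mul_sum, hcollapse]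
    _ = ∑ a, marg p i a * ∑ c, W a c * f a c := (sum_marg_mul p i fun a => ∑ c, W a c * f a c).symm
    _ = ∑ a, ∑ c, marg p i a * W a c * f a c := by simp_rw [mul_sum, mul_assoc]

lemma outEnergy_nCh_blockE (p : (Fin n → α) → ℝ) {W : α → β → ℝ} (hW : IsChannel W)
    (b : β → ℝ) : outEnergy p (nCh W n) (blockE b) = ∑ i, outEnergy (marg p i) W b := by
  have hterm : ∀ i, outEnergy (marg p i) W b = ∑ x, ∑ y, p x * nCh W n x y * b (y i) := by
    intro i
    rw [sum_sum_mul_nCh_apply p hW i fun _ c => b c, sum_comm]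
    simp only [outEnergy, outDist, sum_mul]
  calc outEnergy p (nCh W n) (blockE b)
      = ∑ i, ∑ x, ∑ y, p x * nCh W n x y * b (y i) := by
        simp only [outEnergy, outDist, blockE, sum_mul, mul_sum]
        rw [sum_comm, sum_congr rfl fun x _ => sum_comm, sum_comm]
    _ = ∑ i, outEnergy (marg p i) W b := sum_congr rfl fun i _ => (hterm i).symm

lemma pos_of_mul_nCh_pos {p : (Fin n → α) → ℝ} (hp : ∀ x, 0 ≤ p x) {W : α → β → ℝ}
    (hW : IsChannel W) {x : Fin n → α} {y : Fin n → β} (h : 0 < p x * nCh W n x y) (i : Fin n) :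
    0 < W (x i) (y i) ∧ 0 < outDist (marg p i) W (y i) := by
  have hpx : 0 < p x := pos_of_mul_pos_left h ((hW.nCh n x).1 y)
  have hWi : 0 < W (x i) (y i) := by
    refine ((hW (x i)).1 (y i)).lt_of_ne fun h0 => ?_
    simp [_root_.nCh, prod_eq_zero (f := fun j => W (x j) (y j)) (mem_univ i) h0.symm] at h
  refine ⟨hWi, lt_of_lt_of_le ?_ (mul_le_outDist (marg_nonneg hp i) hW (x i) (y i))⟩
  exact mul_pos (hpx.trans_le (le_marg hp i x)) hWi

lemma sum_mul_log_nCh_div_eq_sum_mutInfo_marg {p : (Fin n → α) → ℝ} (hp : ∀ x, 0 ≤ p x)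
    {W : α → β → ℝ} (hW : IsChannel W) :
    ∑ x, ∑ y, p x * nCh W n x y
        * Real.log (nCh W n x y / ∏ i, outDist (marg p i) W (y i))
      = ∑ i, mutInfo (marg p i) W := by
  have hsplit : ∀ x y, p x * nCh W n x y
        * Real.log (nCh W n x y / ∏ i, outDist (marg p i) W (y i))
      = ∑ i, p x * nCh W n x y * Real.log (W (x i) (y i) / outDist (marg p i) W (y i)) := by
    intro x y
    rcases (mul_nonneg (hp x) ((hW.nCh n x).1 y)).eq_or_lt with h0 | h0
    · simp [← h0]
    have hpos := pos_of_mul_nCh_pos hp hW h0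
    rw [← mul_sum, _root_.nCh, ← prod_div_distrib,
      Real.log_prod fun i _ => (div_pos (hpos i).1 (hpos i).2).ne']
  simp only [hsplit]
  rw [sum_congr rfl fun x _ => sum_comm, sum_comm]
  exact sum_congr rfl fun i _ =>
    sum_sum_mul_nCh_apply p hW i fun a c => Real.log (W a c / outDist (marg p i) W c)

lemma mutInfo_nCh_le_sum_mutInfo_marg {p : (Fin n → α) → ℝ} (hp : IsProbVec p)
    {W : α → β → ℝ} (hW : IsChannel W) :
    mutInfo p (nCh W n) ≤ ∑ i, mutInfo (marg p i) W := by
  rw [← sum_mul_log_nCh_div_eq_sum_mutInfo_marg hp.1 hW]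
  refine mutInfo_le_sum_mul_log_div hp (hW.nCh n)
    (fun y => prod_nonneg fun i _ => outDist_nonneg (hp.marg i).1 hW _) ?_ fun y hy => ?_
  · rw [← Fintype.prod_sum fun i c => outDist (marg p i) W c]
    simp [sum_outDist (hp.marg _) hW]
  · obtain ⟨x, -, hx⟩ := exists_lt_of_sum_lt (s := univ) (f := 0)
      (g := fun x => p x * nCh W n x y) (by simpa [outDist] using hy)
    exact prod_pos fun i _ => (pos_of_mul_nCh_pos hp.1 hW hx i).2

lemma mutInfo_prodDist_nCh {p : α → ℝ} (hp : IsProbVec p) {W : α → β → ℝ} (hW : IsChannel W) :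
    mutInfo (prodDist p) (nCh W n) = n * mutInfo p W := by
  calc mutInfo (prodDist p) (nCh W n)
      = ∑ x, ∑ y, prodDist p x * nCh W n x y
          * Real.log (nCh W n x y / ∏ i, outDist (marg (prodDist p) i) W (y i)) := by
        simp only [marg_prodDist hp, ← outDist_prodDist_nCh]
        rfl
    _ = ∑ i, mutInfo (marg (prodDist p) i) W :=
        sum_mul_log_nCh_div_eq_sum_mutInfo_marg hp.prodDist.1 hW
    _ = n * mutInfo p W := by simp [marg_prodDist hp]

lemma outEnergy_prodDist_nCh {p : α → ℝ} (hp : IsProbVec p) {W : α → β → ℝ}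
    (hW : IsChannel W) (b : β → ℝ) :
    outEnergy (prodDist p) (nCh W n) (blockE b) = n * outEnergy p W b := by
  simp [outEnergy_nCh_blockE _ hW, marg_prodDist hp]

end Memoryless

section Mixture
variable {κ α β : Type} [Fintype κ] [Fintype α]

def mixDist (w : κ → ℝ) (P : κ → α → ℝ) (a : α) : ℝ := ∑ k, w k * P k a

lemma IsProbVec.mixDist {w : κ → ℝ} (hw : IsProbVec w) {P : κ → α → ℝ}
    (hP : ∀ k, IsProbVec (P k)) : IsProbVec (mixDist w P) :=
  ⟨fun a => sum_nonneg fun k _ => mul_nonneg (hw.1 k) ((hP k).1 a), by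
    simp only [_root_.mixDist]
    rw [sum_comm]
    simp [← mul_sum, (hP _).2, hw.2]⟩

lemma outDist_mixDist (w : κ → ℝ) (P : κ → α → ℝ) (W : α → β → ℝ) (c : β) :
    outDist (mixDist w P) W c = ∑ k, w k * outDist (P k) W c := by
  simp only [outDist, mixDist, sum_mul, mul_sum, mul_assoc]
  exact sum_comm

lemma outEnergy_mixDist [Fintype β] (w : κ → ℝ) (P : κ → α → ℝ) (W : α → β → ℝ) (b : β → ℝ) :
    outEnergy (mixDist w P) W b = ∑ k, w k * outEnergy (P k) W b := by
  simp only [outEnergy, outDist_mixDist, sum_mul, mul_sum, mul_assoc]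
  exact sum_comm

lemma sum_mul_mutInfo_le_mutInfo_mixDist [Fintype β] {w : κ → ℝ} (hw : IsProbVec w) {P : κ → α → ℝ}
    (hP : ∀ k, IsProbVec (P k)) {W : α → β → ℝ} (hW : IsChannel W) :
    ∑ k, w k * mutInfo (P k) W ≤ mutInfo (mixDist w P) W := by
  have hmix := hw.mixDist hP
  have hk : ∀ k, w k * mutInfo (P k) W ≤ w k * ∑ a, ∑ c,
      P k a * W a c * Real.log (W a c / outDist (mixDist w P) W c) := by
    intro k
    rcases (hw.1 k).eq_or_lt with h | h
    · simp [← h]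
    refine mul_le_mul_of_nonneg_left (mutInfo_le_sum_mul_log_div (hP k) hW
      (outDist_nonneg hmix.1 hW) (sum_outDist hmix hW).le fun c hc => ?_) h.le
    rw [outDist_mixDist]
    exact (mul_pos h hc).trans_le <| single_le_sum (f := fun j => w j * outDist (P j) W c)
      (fun j _ => mul_nonneg (hw.1 j) (outDist_nonneg (hP j).1 hW c)) (mem_univ k)
  calc ∑ k, w k * mutInfo (P k) W
      ≤ ∑ k, w k * ∑ a, ∑ c, P k a * W a c * Real.log (W a c / outDist (mixDist w P) W c) :=
        sum_le_sum fun k _ => hk k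
    _ = mutInfo (mixDist w P) W := by
        simp only [mutInfo, mul_sum]
        rw [sum_comm]
        refine sum_congr rfl fun a _ => ?_
        rw [sum_comm]
        refine sum_congr rfl fun c _ => ?_
        rw [mixDist, sum_mul, sum_mul]
        exact sum_congr rfl fun k _ => by ring

end Mixture

section Relabel
variable {α α' β β' : Type} [Fintype α] [Fintype α']
  (e : α' ≃ α) (f : β' ≃ β)

lemma isProbVec_comp_equiv_iff {p : α → ℝ} : IsProbVec (p ∘ e) ↔ IsProbVec p := by
  simp only [IsProbVec, Function.comp_apply, e.sum_comp p, e.forall_congr_left,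
    Equiv.apply_symm_apply]

lemma outDist_comp_equiv (p : α → ℝ) (W : α → β → ℝ) (y : β') :
    outDist (p ∘ e) (fun x y => W (e x) (f y)) y = outDist p W (f y) :=
  e.sum_comp fun a => p a * W a (f y)

lemma outEnergy_comp_equiv [Fintype β] [Fintype β'] (p : α → ℝ) (W : α → β → ℝ) (b : β → ℝ) :
    outEnergy (p ∘ e) (fun x y => W (e x) (f y)) (b ∘ f) = outEnergy p W b := by
  simp only [outEnergy, outDist_comp_equiv, Function.comp_apply]
  exact f.sum_comp fun c => outDist p W c * b c

lemma mutInfo_comp_equiv [Fintype β] [Fintype β'] (p : α → ℝ) (W : α → β → ℝ) :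
    mutInfo (p ∘ e) (fun x y => W (e x) (f y)) = mutInfo p W := by
  simp only [mutInfo, outDist_comp_equiv, Function.comp_apply]
  rw [e.sum_comp fun a => ∑ y, p a * W a (f y) * Real.log (W a (f y) / outDist p W (f y))]
  exact sum_congr rfl fun a _ => f.sum_comp fun c => p a * W a c * Real.log (W a c / outDist p W c)

end Relabel

lemma nCh_one {α β : Type} (W : α → β → ℝ) :
    nCh W 1 = fun x y => W (Equiv.funUnique (Fin 1) α x) (Equiv.funUnique (Fin 1) β y) := by
  funext x y
  simp [nCh]

lemma blockE_one {β : Type} (b : β → ℝ) :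
    (blockE (n := 1) b) = b ∘ Equiv.funUnique (Fin 1) β := by
  funext y
  simp [blockE]

section MinInfoSet
variable {𝓧 : Type} [Fintype 𝓧] {L : ℕ} {𝓨 : Fin L → Type} [∀ ℓ, Fintype (𝓨 ℓ)]
  {W : ∀ ℓ, 𝓧 → 𝓨 ℓ → ℝ} {b : ∀ ℓ, 𝓨 ℓ → ℝ} {B : Fin L → ℝ}

def minInfoSet (W : ∀ ℓ, 𝓧 → 𝓨 ℓ → ℝ) (b : ∀ ℓ, 𝓨 ℓ → ℝ) (B : Fin L → ℝ) (n : ℕ) : Set ℝ :=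
  { r | ∃ p : (Fin n → 𝓧) → ℝ, IsProbVec p ∧
      (∀ ℓ, (n : ℝ) * B ℓ ≤ outEnergy p (nCh (W ℓ) n) (blockE (b ℓ))) ∧
      r = ⨅ ℓ, mutInfo p (nCh (W ℓ) n) }

lemma CnVec_eq_sSup_minInfoSet (n : ℕ) : CnVec W b B n = sSup (minInfoSet W b B n) := rfl

lemma mem_minInfoSet_one_iff {r : ℝ} : r ∈ minInfoSet W b B 1 ↔
    ∃ p : 𝓧 → ℝ, IsProbVec p ∧ (∀ ℓ, B ℓ ≤ outEnergy p (W ℓ) (b ℓ)) ∧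
      r = ⨅ ℓ, mutInfo p (W ℓ) := by
  set e := Equiv.funUnique (Fin 1) 𝓧
  have hrelabel : ∀ p : 𝓧 → ℝ, (IsProbVec (p ∘ e) ∧
      (∀ ℓ, ((1 : ℕ) : ℝ) * B ℓ ≤ outEnergy (p ∘ e) (nCh (W ℓ) 1) (blockE (b ℓ))) ∧
      r = ⨅ ℓ, mutInfo (p ∘ e) (nCh (W ℓ) 1)) ↔
      IsProbVec p ∧ (∀ ℓ, B ℓ ≤ outEnergy p (W ℓ) (b ℓ)) ∧ r = ⨅ ℓ, mutInfo p (W ℓ) := by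
    intro p
    simp only [nCh_one, blockE_one, isProbVec_comp_equiv_iff, outEnergy_comp_equiv,
      mutInfo_comp_equiv, Nat.cast_one, one_mul, e]
  constructor
  · rintro ⟨p₁, hp₁⟩
    refine ⟨p₁ ∘ e.symm, (hrelabel _).1 ?_⟩
    simpa [Function.comp_def] using hp₁
  · rintro ⟨p, hp⟩
    exact ⟨p ∘ e, (hrelabel p).2 hp⟩

lemma mul_mem_minInfoSet (hW : ∀ ℓ, IsChannel (W ℓ)) (n : ℕ) {r : ℝ}
    (hr : r ∈ minInfoSet W b B 1) : (n : ℝ) * r ∈ minInfoSet W b B n := by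
  classical
  obtain ⟨p, hp, hE, rfl⟩ := mem_minInfoSet_one_iff.1 hr
  refine ⟨prodDist p, hp.prodDist, fun ℓ => ?_, ?_⟩
  · rw [outEnergy_prodDist_nCh hp (hW ℓ)]
    exact mul_le_mul_of_nonneg_left (hE ℓ) n.cast_nonneg
  · simp only [mutInfo_prodDist_nCh hp (hW _), Real.mul_iInf_of_nonneg n.cast_nonneg]

lemma exists_mem_minInfoSet_one_le (hW : ∀ ℓ, IsChannel (W ℓ)) {n : ℕ} (hn : 0 < n) {r : ℝ}
    (hr : r ∈ minInfoSet W b B n) : ∃ r' ∈ minInfoSet W b B 1, r ≤ n * r' := by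
  classical
  obtain ⟨p, hp, hE, rfl⟩ := hr
  have hn' : (0 : ℝ) < n := Nat.cast_pos.2 hn
  set w : Fin n → ℝ := fun _ => (n : ℝ)⁻¹
  have hw : IsProbVec w := ⟨fun _ => by positivity, by simp [w, hn'.ne']⟩
  set pbar := mixDist w (marg p)
  have hEbar : ∀ ℓ, B ℓ ≤ outEnergy pbar (W ℓ) (b ℓ) := fun ℓ => by
    rw [outEnergy_mixDist, ← mul_sum, ← outEnergy_nCh_blockE p (hW ℓ), le_inv_mul_iff₀ hn']
    exact hE ℓ
  have hI : ∀ ℓ, mutInfo p (nCh (W ℓ) n) ≤ n * mutInfo pbar (W ℓ) := fun ℓ =>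
    calc mutInfo p (nCh (W ℓ) n)
        ≤ ∑ i, mutInfo (marg p i) (W ℓ) := mutInfo_nCh_le_sum_mutInfo_marg hp (hW ℓ)
      _ = n * ∑ i, w i * mutInfo (marg p i) (W ℓ) := by
        rw [← mul_sum, mul_inv_cancel_left₀ hn'.ne']
      _ ≤ n * mutInfo pbar (W ℓ) := mul_le_mul_of_nonneg_left
        (sum_mul_mutInfo_le_mutInfo_mixDist hw hp.marg (hW ℓ)) hn'.le
  refine ⟨_, mem_minInfoSet_one_iff.2 ⟨pbar, hw.mixDist hp.marg, hEbar, rfl⟩, ?_⟩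
  rw [Real.mul_iInf_of_nonneg hn'.le]
  exact ciInf_mono (Set.finite_range _).bddBelow hI

end MinInfoSet

theorem CnVec_single_letter_general
    {𝓧 : Type} [Fintype 𝓧] {L : ℕ}
    {𝓨 : Fin L → Type} [∀ ℓ, Fintype (𝓨 ℓ)]
    (W : ∀ ℓ, 𝓧 → 𝓨 ℓ → ℝ) (hW : ∀ ℓ, IsChannel (W ℓ))
    (b : ∀ ℓ, 𝓨 ℓ → ℝ)
    (n : ℕ) (hn : 0 < n) (B : Fin L → ℝ) :
    CnVec W b B n = n * CnVec W b B 1 := by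
  rw [CnVec_eq_sSup_minInfoSet, CnVec_eq_sSup_minInfoSet, ← smul_eq_mul,
    ← Real.sSup_smul_of_nonneg n.cast_nonneg]
  refine csSup_eq_csSup_of_forall_exists_le (fun r hr => ?_) ?_
  · obtain ⟨r', hr', hle⟩ := exists_mem_minInfoSet_one_le hW hn hr
    exact ⟨_, Set.smul_mem_smul_set hr', hle⟩
  · rintro _ ⟨r, hr, rfl⟩
    exact ⟨_, mul_mem_minInfoSet hW n hr, le_rfl⟩

/-- **Single-letterization with unequal energy constraints** (Appendix, Theorem 5):
for any multicast DMC with possibly different energy functions `b_ℓ`, any `n ∈ ℤ⁺`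
and any `B⃗ ∈ 𝓑`, `C_n(B⃗) = n · C_1(B⃗)`. -/
theorem CnVec_single_letter
    {𝓧 : Type} [Fintype 𝓧] [Nonempty 𝓧] {L : ℕ} (hL : 0 < L)
    {𝓨 : Fin L → Type} [∀ ℓ, Fintype (𝓨 ℓ)]
    (W : ∀ ℓ, 𝓧 → 𝓨 ℓ → ℝ) (hW : ∀ ℓ, IsChannel (W ℓ))
    (b : ∀ ℓ, 𝓨 ℓ → ℝ) (hb : ∀ ℓ y, 0 ≤ b ℓ y)
    (n : ℕ) (hn : 0 < n) (B : Fin L → ℝ) (hB : B ∈ FeasibleB W b) :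
    CnVec W b B n = n * CnVec W b B 1 :=
  CnVec_single_letter_general W hW b n hn B

end
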